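/- arXiv:2202.12262 — 2 statements merged into one kernel-verified Lean document; each statement's English description precedes it below -/
import Mathlib

section
/- Let K = {x_1, …, x_n} ⊂ ℝ^d be a finite set of n distinct points and let ψ be a feedforward neural network with depth L ∈ ℕ, widths w_i ∈ ℕ, and continuous nonpolynomial activation functions σ_1,…,σ_L. Identify C(K) with ℝ^n via v ↦ (v(x_1), …, v(x_n)). Then sup over y_T ∈ ℝ^n with |y_T| = 1 of inf over y ∈ Ψ(D) of |y − y_T|² is strictly less than 1, where |·| denotes the Euclidean norm on ℝ^n. -/
open scoped BigOperators ENNReal NNReal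

/-- Parameter space `D` of a feedforward network with `L` hidden layers and width
function `w` (`w 0 = d` is the input dimension, hidden layer `i` has width `w i` for
`i = 1, …, L`, and the output layer has width one). The component for `i : Fin L`
consists of the weight matrix `A_{i+1}` and the bias vector `b_{i+1}`; the last
component consists of the output weights `A_{L+1}` and the output bias `b_{L+1}`. -/
abbrev Params (w : ℕ → ℕ) (L : ℕ) : Type :=
  (∀ i : Fin L, ((Fin (w (i + 1)) → Fin (w i) → ℝ) × (Fin (w (i + 1)) → ℝ))) ×
    ((Fin (w L) → ℝ) × ℝ)

/-- The number of degrees of freedom `m = Σ_{i=1}^{L+1} w_i (w_{i-1} + 1)` of the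
network (with `w_{L+1} = 1`). -/
def mdim (w : ℕ → ℕ) (L : ℕ) : ℕ :=
  (∑ i ∈ Finset.range L, w (i + 1) * (w i + 1)) + (w L + 1)

/-- Output of the first `k` hidden layers of the network. -/
noncomputable def hiddenOut (σ : ℕ → ℝ → ℝ) (w : ℕ → ℕ) (L : ℕ)
    (θ : ∀ i : Fin L, ((Fin (w (i + 1)) → Fin (w i) → ℝ) × (Fin (w (i + 1)) → ℝ))) :
    ∀ k : ℕ, k ≤ L → (Fin (w 0) → ℝ) → Fin (w k) → ℝ
  | 0, _, x => x
  | k + 1, h, x => fun i =>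
      σ (k + 1)
        ((∑ j, (θ ⟨k, h⟩).1 i j * hiddenOut σ w L θ k (Nat.le_of_succ_le h) x j) +
          (θ ⟨k, h⟩).2 i)

/-- The scalar output `ψ(α, x)` of the feedforward network. -/
noncomputable def netFun (σ : ℕ → ℝ → ℝ) (w : ℕ → ℕ) (L : ℕ) (α : Params w L)
    (x : Fin (w 0) → ℝ) : ℝ :=
  (∑ j, α.2.1 j * hiddenOut σ w L α.1 L le_rfl x j) + α.2.2

lemma continuous_hiddenOut {σ : ℕ → ℝ → ℝ} {w : ℕ → ℕ} {L : ℕ}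
    (hσ : ∀ i, 1 ≤ i → i ≤ L → Continuous (σ i))
    (θ : ∀ i : Fin L, ((Fin (w (i + 1)) → Fin (w i) → ℝ) × (Fin (w (i + 1)) → ℝ))) :
    ∀ (k : ℕ) (h : k ≤ L), Continuous fun x => hiddenOut σ w L θ k h x := by
  intro k
  induction k with
  | zero =>
      intro h
      first
        | exact continuous_id
        | (simp only [hiddenOut]; exact continuous_id)
  | succ k ih =>
      intro h
      apply continuous_pi
      intro i
      simp only [hiddenOut]
      exact (hσ (k + 1) (Nat.succ_le_succ (Nat.zero_le _)) h).comp
        ((continuous_finset_sum _ fun j _ =>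
          continuous_const.mul ((continuous_apply j).comp (ih (Nat.le_of_succ_le h)))).add
          continuous_const)

lemma continuous_netFun {σ : ℕ → ℝ → ℝ} {w : ℕ → ℕ} {L : ℕ}
    (hσ : ∀ i, 1 ≤ i → i ≤ L → Continuous (σ i)) (α : Params w L) :
    Continuous fun x => netFun σ w L α x := by
  unfold netFun
  exact (continuous_finset_sum _ fun j _ =>
    continuous_const.mul
      ((continuous_apply j).comp (continuous_hiddenOut hσ α.1 L le_rfl))).add continuous_const

/-- The parameter-to-realization map `Ψ : D → C(K)`. -/
noncomputable def Psi (σ : ℕ → ℝ → ℝ) (w : ℕ → ℕ) (L : ℕ)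
    (hσ : ∀ i, 1 ≤ i → i ≤ L → Continuous (σ i)) (K : Set (Fin (w 0) → ℝ))
    (α : Params w L) : C(K, ℝ) :=
  ⟨fun x => netFun σ w L α x, (continuous_netFun hσ α).comp continuous_subtype_val⟩

/-- The affine function `z_{a,c} : x ↦ aᵀ x + c` as an element of `C(K)`. -/
noncomputable def affineCM {n : ℕ} (K : Set (Fin n → ℝ)) (a : Fin n → ℝ) (c : ℝ) :
    C(K, ℝ) :=
  ⟨fun x => (∑ j, a j * (x : Fin n → ℝ) j) + c,
    (continuous_finset_sum _ fun j _ =>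
      continuous_const.mul ((continuous_apply j).comp continuous_subtype_val)).add
      continuous_const⟩

/-- The constant function `z_c : x ↦ c` as an element of `C(K)`. -/
noncomputable def constCM {n : ℕ} (K : Set (Fin n → ℝ)) (c : ℝ) : C(K, ℝ) :=
  ⟨fun _ => c, continuous_const⟩

/-- A function `ℝ → ℝ` is nonpolynomial if it is not the restriction of a polynomial. -/
def IsNonpolynomial (σ : ℝ → ℝ) : Prop :=
  ¬ ∃ p : Polynomial ℝ, ∀ x : ℝ, σ x = p.eval x

/-- `𝓛` is Gâteaux differentiable in its first argument at `(v, y)` with partial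
derivative (identified with an element of `M(K) = C(K)*`) given by the continuous
linear functional `T`. -/
def HasGateauxDerivFirst {n : ℕ} {K : Set (Fin n → ℝ)}
    (𝓛 : C(K, ℝ) → C(K, ℝ) → ℝ) (v y : C(K, ℝ)) (T : C(K, ℝ) →L[ℝ] ℝ) : Prop :=
  ∀ h : C(K, ℝ), Filter.Tendsto (fun s : ℝ => (𝓛 (v + s • h) y - 𝓛 v y) / s)
    (nhdsWithin 0 (Set.Ioi 0)) (nhds (T h))

/-!
The realizable vectors `Ψ(D) ⊆ ℝⁿ` form a cone (rescale the output layer), so a unit vector `y`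
is at distance `< 1` from `Ψ(D)` as soon as `⟪y, v⟫ ≠ 0` for some `v ∈ Ψ(D)`; compactness of the
sphere makes the bound uniform. That `Ψ(D)` lies in no hyperplane `y⊥` is the discriminatory
property of the network. To see `y_{k₀} = 0`, choose the hidden layers so that `x_{k₀}` stays
separated from the other points (a nonconstant continuous activation has a fibre with empty
interior, and Baire's theorem gives weights avoiding it), and vary the last hidden layer: this
yields `∑ₖ yₖ σ(tₖ λ + b) = 0` for all `λ, b`, with `t_k ≠ t_{k₀}` for `k ≠ k₀`. If some moment
`∑ₖ yₖ tₖᵐ` were nonzero, differentiating `m` times in `λ` would force every mollification of `σ`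
to be a polynomial of degree `< m`, and so would be their limit `σ`. Hence all moments vanish,
and `y_{k₀} = 0` by evaluating at a polynomial vanishing exactly at the other `tₖ`.
-/

open Set Filter Topology Polynomial MeasureTheory
open scoped Convolution

theorem exists_forall_notMem_of_isClosed_of_interior_eq_empty {X ι : Type*}
    [TopologicalSpace X] [BaireSpace X] [Nonempty X] [Finite ι] {B : ι → Set X}
    (hc : ∀ i, IsClosed (B i)) (hB : ∀ i, interior (B i) = ∅) : ∃ x, ∀ i, x ∉ B i := by
  by_contra! hcover
  obtain ⟨i, hi⟩ := nonempty_interior_of_iUnion_of_closed hc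
    (eq_univ_of_forall fun x => mem_iUnion.mpr (hcover x))
  simp [hB i] at hi

theorem isOpenMap_dotProduct_add {d : ℕ} {v : Fin d → ℝ} (hv : v ≠ 0) (z : ℝ) :
    IsOpenMap fun a : Fin d → ℝ => a ⬝ᵥ v + z := by
  have hsurj : Function.Surjective ((dotProductBilin ℝ ℝ).flip v) := by
    obtain ⟨j, hj⟩ := Function.ne_iff.mp hv
    refine fun r => ⟨Pi.single j (r / v j), ?_⟩
    simp [single_dotProduct, div_mul_cancel₀ _ hj]
  exact (isOpenMap_add_right z).comp
    (LinearMap.isOpenMap_of_finiteDimensional _ hsurj)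

theorem exists_forall_comp_dotProduct_add_ne {g : ℝ → ℝ} (hg : Continuous g) {z : ℝ}
    (hz : interior (g ⁻¹' {g z}) = ∅) {ι : Type*} [Finite ι] {d : ℕ} {v : ι → Fin d → ℝ}
    (hv : ∀ i, v i ≠ 0) : ∃ a : Fin d → ℝ, ∀ i, g (a ⬝ᵥ v i + z) ≠ g z := by
  have hcont : ∀ i, Continuous fun a : Fin d → ℝ => a ⬝ᵥ v i + z := fun i => by
    fun_prop
  refine exists_forall_notMem_of_isClosed_of_interior_eq_empty
    (B := fun i => (fun a => a ⬝ᵥ v i + z) ⁻¹' (g ⁻¹' {g z}))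
    (fun i => (isClosed_singleton.preimage hg).preimage (hcont i)) fun i => ?_
  rw [← (isOpenMap_dotProduct_add (hv i) z).preimage_interior_eq_interior_preimage (hcont i),
    hz, preimage_empty]

theorem IsNonpolynomial.exists_apply_ne {σ : ℝ → ℝ} (h : IsNonpolynomial σ) :
    ∃ u v, σ u ≠ σ v := by
  by_contra! hc
  exact h ⟨C (σ 0), fun x => by simp [hc x 0]⟩

/-- Fibres with nonempty interior contain a rational each, while a nonconstant continuous
function has uncountably many fibres. -/
theorem Continuous.exists_interior_fiber_eq_empty {σ : ℝ → ℝ} (hσ : Continuous σ)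
    (h : ∃ u v, σ u ≠ σ v) : ∃ z, interior (σ ⁻¹' {σ z}) = ∅ := by
  by_contra! hne
  have hrange : range σ ⊆ range fun q : ℚ => σ q := by
    rintro _ ⟨z, rfl⟩
    obtain ⟨q, hq⟩ := Rat.denseRange_cast.exists_mem_open isOpen_interior (hne z)
    exact ⟨q, interior_subset (s := σ ⁻¹' {σ z}) hq⟩
  have hcount : ∀ u v, (Icc (σ u) (σ v)).Countable := fun u v =>
    ((countable_range _).mono hrange).mono (intermediate_value_univ u v hσ)
  obtain ⟨u, v, huv⟩ := h
  rcases huv.lt_or_gt with hlt | hlt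
  · exact hlt.not_ge (Cardinal.Real.Icc_countable_iff.mp (hcount u v))
  · exact hlt.not_ge (Cardinal.Real.Icc_countable_iff.mp (hcount v u))

theorem exists_comp_dotProduct_add_ne {g : ℝ → ℝ} (hg : Continuous g) (hnc : ∃ u v, g u ≠ g v)
    {ι : Type*} [Finite ι] {d : ℕ} {u : ι → Fin d → ℝ} {i₀ : ι}
    (hu : ∀ i, i ≠ i₀ → u i ≠ u i₀) :
    ∃ (a : Fin d → ℝ) (b : ℝ), ∀ i, i ≠ i₀ → g (a ⬝ᵥ u i + b) ≠ g (a ⬝ᵥ u i₀ + b) := by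
  obtain ⟨z, hz⟩ := hg.exists_interior_fiber_eq_empty hnc
  obtain ⟨a, ha⟩ := exists_forall_comp_dotProduct_add_ne hg hz
    (v := fun i : {i // i ≠ i₀} => u i - u i₀) fun i => sub_ne_zero.mpr (hu i i.2)
  refine ⟨a, z - a ⬝ᵥ u i₀, fun i hi => ?_⟩
  convert ha ⟨i, hi⟩ using 2
  · rw [dotProduct_sub]
    ring
  · ring

theorem exists_dotProduct_ne {ι : Type*} [Finite ι] {d : ℕ} {u : ι → Fin d → ℝ} {i₀ : ι}
    (hu : ∀ i, i ≠ i₀ → u i ≠ u i₀) : ∃ a : Fin d → ℝ, ∀ i, i ≠ i₀ → a ⬝ᵥ u i ≠ a ⬝ᵥ u i₀ := by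
  obtain ⟨a, b, hab⟩ := exists_comp_dotProduct_add_ne continuous_id ⟨0, 1, zero_ne_one⟩ hu
  exact ⟨a, fun i hi h => hab i hi (by simp [h])⟩

theorem eq_zero_of_forall_sum_mul_pow_eq_zero {ι : Type*} [Fintype ι]
    {t y : ι → ℝ} {i₀ : ι} (ht : ∀ i, i ≠ i₀ → t i ≠ t i₀)
    (h : ∀ m : ℕ, ∑ i, y i * t i ^ m = 0) : y i₀ = 0 := by
  classical
  have hpoly : ∀ p : ℝ[X], ∑ i, y i * p.eval (t i) = 0 := fun p => by
    simp_rw [eval_eq_sum_range, Finset.mul_sum, mul_left_comm (y _)]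
    rw [Finset.sum_comm]
    simp [← Finset.mul_sum, h]
  set q : ℝ[X] := ∏ j ∈ Finset.univ.erase i₀, (X - C (t j))
  have hq : ∀ i, i ≠ i₀ → q.eval (t i) = 0 := fun i hi => by
    simp only [q, eval_prod, eval_sub, eval_X, eval_C]
    exact Finset.prod_eq_zero (Finset.mem_erase.mpr ⟨hi, Finset.mem_univ i⟩) (sub_self _)
  have hq₀ : q.eval (t i₀) ≠ 0 := by
    simpa [q, eval_prod, Finset.prod_ne_zero_iff, sub_eq_zero] using fun j hj => (ht j hj).symm
  have := hpoly q
  rw [Finset.sum_eq_single i₀ (fun i _ hi => by simp [hq i hi]) (by simp)] at this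
  exact (mul_eq_zero.mp this).resolve_right hq₀

theorem iteratedDeriv_eq_zero_of_sum_mul_comp_affine_eq_zero {ι : Type*} [Fintype ι]
    {g : ℝ → ℝ} {m : ℕ} (hg : ContDiff ℝ m g) {t y : ι → ℝ}
    (h : ∀ l b, ∑ i, y i * g (t i * l + b) = 0) (hm : ∑ i, y i * t i ^ m ≠ 0) (b : ℝ) :
    iteratedDeriv m g b = 0 := by
  have hshift : ContDiff ℝ m fun z => g (z + b) := hg.comp (contDiff_id.add contDiff_const)
  have hterm : ∀ i, iteratedDeriv m (fun l => g (t i * l + b)) 0 =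
      t i ^ m * iteratedDeriv m g b := fun i => by
    rw [iteratedDeriv_comp_const_mul hshift, iteratedDeriv_comp_add_const]
    simp
  have hsum : iteratedDeriv m (fun l => ∑ i, y i * g (t i * l + b)) 0 =
      (∑ i, y i * t i ^ m) * iteratedDeriv m g b := by
    have hsmooth : ∀ i, ContDiff ℝ m fun l => y i * g (t i * l + b) := fun i =>
      contDiff_const.mul (hshift.comp (contDiff_const.mul contDiff_id))
    rw [iteratedDeriv_fun_sum fun i _ => (hsmooth i).contDiffAt]
    simp_rw [iteratedDeriv_const_mul_field, hterm, Finset.sum_mul, mul_assoc]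
  simp only [h, iteratedDeriv_const, ite_self] at hsum
  exact (mul_eq_zero.mp hsum.symm).resolve_left hm

theorem exists_polynomial_of_iteratedDeriv_eq_zero {g : ℝ → ℝ} {m : ℕ} (hg : ContDiff ℝ m g)
    (h : ∀ x, iteratedDeriv m g x = 0) : ∃ p : ℝ[X], p.degree < m ∧ ∀ x, g x = p.eval x := by
  cases m with
  | zero => exact ⟨0, by simp, by simpa using h⟩
  | succ n =>
    refine ⟨∑ k : Fin (n + 1), C (iteratedDeriv k g 0 / (k : ℕ).factorial) * X ^ (k : ℕ),
      degree_sum_fin_lt _, fun x => ?_⟩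
    rcases eq_or_ne x 0 with rfl | hx
    · simp [eval_finsetSum, Fin.sum_univ_succ]
    obtain ⟨x', -, hx'⟩ := taylor_mean_remainder_lagrange_iteratedDeriv hx.symm
      (hg.contDiffOn (s := uIcc 0 x))
    rw [h, zero_mul, zero_div, sub_eq_zero, taylor_within_apply] at hx'
    rw [hx', eval_finsetSum, ← Fin.sum_univ_eq_sum_range]
    refine Finset.sum_congr rfl fun k _ => ?_
    rw [iteratedDerivWithin_eq_iteratedDeriv (uniqueDiffOn_uIcc hx.symm)
      (hg.contDiffAt.of_le ?_) left_mem_uIcc]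
    · simp only [eval_mul, eval_C, eval_pow, eval_X, sub_zero, smul_eq_mul]
      ring
    · exact_mod_cast k.isLt.le

theorem exists_polynomial_of_tendsto {ι : Type*} {l : Filter ι} [l.NeBot] {m : ℕ}
    {f : ι → ℝ → ℝ} {g : ℝ → ℝ} (hf : ∀ i, ∃ p : ℝ[X], p.degree < m ∧ ∀ x, f i x = p.eval x)
    (hg : ∀ x, Tendsto (fun i => f i x) l (𝓝 (g x))) : ∃ p : ℝ[X], ∀ x, g x = p.eval x := by
  classical
  set s : Finset ℝ := (Finset.range m).image (↑)
  have hs : s.card = m := by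
    rw [Finset.card_image_of_injective _ Nat.cast_injective, Finset.card_range]
  have hrepr : ∀ i x, f i x = (Lagrange.interpolate s id (f i)).eval x := fun i x => by
    obtain ⟨p, hp, hpf⟩ := hf i
    rw [← Lagrange.eq_interpolate_of_eval_eq (f i) (Set.injOn_id _) (hs ▸ hp)
      fun j _ => (hpf j).symm, hpf]
  refine ⟨Lagrange.interpolate s id g, fun x => tendsto_nhds_unique (hg x) ?_⟩
  simp_rw [hrepr, Lagrange.interpolate_apply, eval_finsetSum, eval_mul, eval_C]
  exact tendsto_finsetSum _ fun j _ => (hg j).mul_const _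

theorem sum_mul_convolution_comp_affine_eq_zero {ι : Type*} [Fintype ι] {σ : ℝ → ℝ}
    (hσ : Continuous σ) (φ : ContDiffBump (0 : ℝ)) {t y : ι → ℝ}
    (h : ∀ l b, ∑ i, y i * σ (t i * l + b) = 0) (l b : ℝ) :
    ∑ i, y i * (φ.normed volume ⋆[ContinuousLinearMap.lsmul ℝ ℝ, volume] σ) (t i * l + b) = 0 := by
  have hint : ∀ i, Integrable fun s => y i * (φ.normed volume s * σ (t i * l + b - s)) := fun i =>
    (Continuous.integrable_of_hasCompactSupport (φ.continuous_normed.mul (by fun_prop))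
      φ.hasCompactSupport_normed.mul_right).const_mul _
  simp_rw [convolution_lsmul, smul_eq_mul, ← integral_const_mul]
  rw [← integral_finsetSum _ fun i _ => hint i]
  simp_rw [mul_left_comm (y _), ← Finset.mul_sum, add_sub_assoc, h, mul_zero, integral_zero]

theorem IsNonpolynomial.eq_zero_of_sum_mul_comp_affine_eq_zero {σ : ℝ → ℝ}
    (hnp : IsNonpolynomial σ) (hσ : Continuous σ) {ι : Type*} [Fintype ι] {t y : ι → ℝ}
    {i₀ : ι} (ht : ∀ i, i ≠ i₀ → t i ≠ t i₀) (h : ∀ l b, ∑ i, y i * σ (t i * l + b) = 0) :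
    y i₀ = 0 := by
  refine eq_zero_of_forall_sum_mul_pow_eq_zero ht fun m => ?_
  by_contra hm
  let φ : ℕ → ContDiffBump (0 : ℝ) := fun j =>
    ⟨1 / (j + 1) / 2, 1 / (j + 1), by positivity, half_lt_self (by positivity)⟩
  have hsmooth : ∀ j, ContDiff ℝ m ((φ j).normed volume ⋆[ContinuousLinearMap.lsmul ℝ ℝ, volume] σ) :=
    fun j => contDiff_infty.mp ((φ j).hasCompactSupport_normed.contDiff_convolution_left _
      (φ j).contDiff_normed hσ.locallyIntegrable) m
  refine hnp (exists_polynomial_of_tendsto (m := m) (fun j => ?_) fun x =>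
    ContDiffBump.convolution_tendsto_right_of_continuous (φ := φ) (μ := volume)
      tendsto_one_div_add_atTop_nhds_zero_nat hσ x)
  exact exists_polynomial_of_iteratedDeriv_eq_zero (hsmooth j)
    (iteratedDeriv_eq_zero_of_sum_mul_comp_affine_eq_zero (hsmooth j)
      (sum_mul_convolution_comp_affine_eq_zero hσ (φ j) h) hm)

section Network

variable {σ : ℕ → ℝ → ℝ} {w : ℕ → ℕ} {L : ℕ}

theorem hiddenOut_congr
    {θ θ' : ∀ i : Fin L, (Fin (w (i + 1)) → Fin (w i) → ℝ) × (Fin (w (i + 1)) → ℝ)} :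
    ∀ {k : ℕ} (hk : k ≤ L), (∀ i : Fin L, (i : ℕ) < k → θ i = θ' i) →
      hiddenOut σ w L θ k hk = hiddenOut σ w L θ' k hk
  | 0, _, _ => rfl
  | k + 1, hk, h => by
    funext x i
    simp only [hiddenOut]
    rw [h ⟨k, hk⟩ k.lt_succ_self,
      hiddenOut_congr (Nat.le_of_succ_le hk) fun i hi => h i (Nat.lt_succ_of_lt hi)]

theorem hiddenOut_update_succ
    (θ : ∀ i : Fin L, (Fin (w (i + 1)) → Fin (w i) → ℝ) × (Fin (w (i + 1)) → ℝ))
    {k : ℕ} (hk : k + 1 ≤ L) (a : Fin (w k) → ℝ) (b : ℝ) (x : Fin (w 0) → ℝ) :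
    hiddenOut σ w L (Function.update θ ⟨k, hk⟩
        ((fun _ => a, fun _ => b) : (Fin (w (k + 1)) → Fin (w k) → ℝ) × (Fin (w (k + 1)) → ℝ)))
        (k + 1) hk x =
      fun _ => σ (k + 1) (a ⬝ᵥ hiddenOut σ w L θ k (Nat.le_of_succ_le hk) x + b) := by
  funext i
  have hbelow := hiddenOut_congr (σ := σ) (Nat.le_of_succ_le hk)
    (θ := Function.update θ ⟨k, hk⟩ (fun _ => a, fun _ => b)) (θ' := θ) fun i hi =>
      Function.update_of_ne (Fin.ne_of_val_ne hi.ne) _ _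
  simp only [hiddenOut, Function.update_self, hbelow, dotProduct]

theorem netFun_single (θ : ∀ i : Fin L, (Fin (w (i + 1)) → Fin (w i) → ℝ) × (Fin (w (i + 1)) → ℝ))
    (j : Fin (w L)) (x : Fin (w 0) → ℝ) :
    netFun σ w L (θ, (Pi.single j 1, 0)) x = hiddenOut σ w L θ L le_rfl x j := by
  simp [netFun, Pi.single_apply]

theorem netFun_smul (α : Params w L) (r : ℝ) (x : Fin (w 0) → ℝ) :
    netFun σ w L (α.1, (r • α.2.1, r * α.2.2)) x = r * netFun σ w L α x := by
  simp only [netFun, Pi.smul_apply, smul_eq_mul, mul_add, Finset.mul_sum, mul_assoc]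

theorem exists_hiddenOut_ne (hw : ∀ i, 1 ≤ i → i ≤ L → 0 < w i)
    (hσ : ∀ i, 1 ≤ i → i ≤ L → Continuous (σ i))
    (hσc : ∀ i, 1 ≤ i → i ≤ L → ∃ u v, σ i u ≠ σ i v) {ι : Type*} [Finite ι]
    {x : ι → Fin (w 0) → ℝ} {i₀ : ι} (hx : ∀ i, i ≠ i₀ → x i ≠ x i₀) (k : ℕ) (hk : k ≤ L) :
    ∃ θ, ∀ i, i ≠ i₀ → hiddenOut σ w L θ k hk (x i) ≠ hiddenOut σ w L θ k hk (x i₀) := by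
  induction k with
  | zero => exact ⟨0, hx⟩
  | succ k ih =>
    obtain ⟨θ, hθ⟩ := ih (Nat.le_of_succ_le hk)
    obtain ⟨a, b, hab⟩ :=
      exists_comp_dotProduct_add_ne (hσ _ k.succ_pos hk) (hσc _ k.succ_pos hk) hθ
    refine ⟨Function.update θ ⟨k, hk⟩ (fun _ => a, fun _ => b), fun i hi h => hab i hi ?_⟩
    simpa [hiddenOut_update_succ] using congrFun h ⟨0, hw _ k.succ_pos hk⟩

theorem eq_zero_of_forall_sum_mul_netFun_eq_zero (hL : 0 < L)
    (hw : ∀ i, 1 ≤ i → i ≤ L → 0 < w i) (hσ : ∀ i, 1 ≤ i → i ≤ L → Continuous (σ i))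
    (hσnp : ∀ i, 1 ≤ i → i ≤ L → IsNonpolynomial (σ i)) {ι : Type*} [Fintype ι]
    {x : ι → Fin (w 0) → ℝ} (hx : Function.Injective x) {y : ι → ℝ}
    (hy : ∀ α : Params w L, ∑ i, y i * netFun σ w L α (x i) = 0) : y = 0 := by
  obtain ⟨M, rfl⟩ : ∃ M, L = M + 1 := ⟨L - 1, by omega⟩
  funext i₀
  obtain ⟨θ, hθ⟩ := exists_hiddenOut_ne hw hσ (fun i h1 h2 => (hσnp i h1 h2).exists_apply_ne)
    (i₀ := i₀) (fun i hi => hx.ne hi) M M.le_succ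
  obtain ⟨a, ha⟩ := exists_dotProduct_ne hθ
  refine (hσnp _ M.succ_pos le_rfl).eq_zero_of_sum_mul_comp_affine_eq_zero
    (hσ _ M.succ_pos le_rfl) ha fun l b => ?_
  let j : Fin (w (M + 1)) := ⟨0, hw _ M.succ_pos le_rfl⟩
  convert hy (Function.update θ ⟨M, M.lt_succ_self⟩ (fun _ => l • a, fun _ => b),
    (Pi.single j 1, 0)) using 3 with i
  rw [netFun_single, hiddenOut_update_succ, smul_dotProduct, smul_eq_mul, mul_comm]

end Network

section Geometry

open Metric

variable {E : Type*} [NormedAddCommGroup E]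

theorem sInf_norm_sub_sq_le_infDist_sq {P : Type*} [Nonempty P] (f : P → E) (y : E) :
    sInf {t | ∃ p, t = ‖f p - y‖ ^ 2} ≤ infDist y (range f) ^ 2 := by
  set A := sInf {t | ∃ p, t = ‖f p - y‖ ^ 2}
  have hA : 0 ≤ A := Real.sInf_nonneg fun t ⟨p, ht⟩ => ht ▸ sq_nonneg _
  have hsqrt : √A ≤ infDist y (range f) := by
    refine (le_infDist (range_nonempty f)).mpr ?_
    rintro _ ⟨p, rfl⟩
    calc √A ≤ √(‖f p - y‖ ^ 2) :=
          Real.sqrt_le_sqrt (csInf_le ⟨0, fun t ⟨q, ht⟩ => ht ▸ sq_nonneg _⟩ ⟨p, rfl⟩)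
      _ = dist y (f p) := by rw [Real.sqrt_sq (norm_nonneg _), dist_comm, dist_eq_norm]
  calc A = √A ^ 2 := (Real.sq_sqrt hA).symm
    _ ≤ _ := pow_le_pow_left₀ (Real.sqrt_nonneg A) hsqrt 2

variable [InnerProductSpace ℝ E]

theorem infDist_lt_norm_of_inner_ne_zero {S : Set E} (hS : ∀ v ∈ S, ∀ r : ℝ, r • v ∈ S)
    {y v : E} (hv : v ∈ S) (hyv : inner ℝ y v ≠ 0) : infDist y S < ‖y‖ := by
  have hv0 : v ≠ 0 := by rintro rfl; simp at hyv
  have hnorm : 0 < ‖v‖ ^ 2 := by positivity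
  set r := inner ℝ y v / ‖v‖ ^ 2 with hr
  -- `r • v` is the orthogonal projection of `y` onto the line through `v`
  have hdist : ‖y - r • v‖ ^ 2 = ‖y‖ ^ 2 - inner ℝ y v ^ 2 / ‖v‖ ^ 2 := by
    rw [norm_sub_sq_real, real_inner_smul_right, norm_smul, mul_pow, Real.norm_eq_abs, sq_abs, hr]
    field_simp
    ring
  have hlt : ‖y - r • v‖ < ‖y‖ := by
    refine lt_of_pow_lt_pow_left₀ 2 (norm_nonneg _) ?_
    rw [hdist]
    exact sub_lt_self _ (div_pos (sq_pos_of_ne_zero hyv) hnorm)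
  calc infDist y S ≤ dist y (r • v) := infDist_le_dist_of_mem (hS v hv r)
    _ < ‖y‖ := by rwa [dist_eq_norm]

theorem exists_lt_one_forall_infDist_le [FiniteDimensional ℝ E] {S : Set E}
    (hS : ∀ v ∈ S, ∀ r : ℝ, r • v ∈ S) (hspan : ∀ y ≠ 0, ∃ v ∈ S, inner ℝ y v ≠ 0) :
    ∃ c, 0 ≤ c ∧ c < 1 ∧ ∀ y, ‖y‖ = 1 → infDist y S ≤ c := by
  have hlt : ∀ y ∈ sphere (0 : E) 1, infDist y S < 1 := fun y hy => by
    rw [mem_sphere_zero_iff_norm] at hy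
    obtain ⟨v, hv, hyv⟩ := hspan y (norm_ne_zero_iff.mp (hy ▸ one_ne_zero))
    exact hy ▸ infDist_lt_norm_of_inner_ne_zero hS hv hyv
  rcases (sphere (0 : E) 1).eq_empty_or_nonempty with hempty | hne
  · exact ⟨0, le_rfl, one_pos, fun y hy => by simpa [hempty] using mem_sphere_zero_iff_norm.mpr hy⟩
  obtain ⟨y₀, hy₀, hmax⟩ :=
    (isCompact_sphere (0 : E) 1).exists_isMaxOn hne (continuous_infDist_pt S).continuousOn
  exact ⟨infDist y₀ S, infDist_nonneg, hlt y₀ hy₀,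
    fun y hy => isMaxOn_iff.mp hmax y (mem_sphere_zero_iff_norm.mpr hy)⟩

theorem sSup_sInf_norm_sub_sq_lt_one [FiniteDimensional ℝ E] {P : Type*} (f : P → E)
    (hcone : ∀ p (r : ℝ), ∃ q, f q = r • f p) (hspan : ∀ y ≠ 0, ∃ p, inner ℝ y (f p) ≠ 0) :
    sSup {s | ∃ y : E, ‖y‖ = 1 ∧ s = sInf {t | ∃ p, t = ‖f p - y‖ ^ 2}} < 1 := by
  obtain ⟨c, hc0, hc1, hc⟩ := exists_lt_one_forall_infDist_le (S := range f)
    (by rintro _ ⟨p, rfl⟩ r; exact (hcone p r).imp fun q hq => hq)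
    fun y hy => let ⟨p, hp⟩ := hspan y hy; ⟨f p, mem_range_self p, hp⟩
  refine (Real.sSup_le ?_ (sq_nonneg c)).trans_lt (by nlinarith)
  rintro _ ⟨y, hy, rfl⟩
  have : Nonempty P := by
    obtain ⟨p, -⟩ := hspan y (norm_ne_zero_iff.mp (hy ▸ one_ne_zero))
    exact ⟨p⟩
  exact (sInf_norm_sub_sq_le_infDist_sq f y).trans
    (pow_le_pow_left₀ infDist_nonneg (hc y hy) 2)

end Geometry

theorem improved_expressiveness_on_finite_sets_general
    (w : ℕ → ℕ) (L : ℕ) (hL : 0 < L) (hw : ∀ i, 1 ≤ i → i ≤ L → 0 < w i)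
    (σ : ℕ → ℝ → ℝ)
    (hσ : ∀ i, 1 ≤ i → i ≤ L → Continuous (σ i))
    (hσnp : ∀ i, 1 ≤ i → i ≤ L → IsNonpolynomial (σ i))
    (n : ℕ)
    (x : Fin n → (Fin (w 0) → ℝ)) (hx : Function.Injective x) :
    sSup {s : ℝ | ∃ yT : EuclideanSpace ℝ (Fin n), ‖yT‖ = 1 ∧
      s = sInf {t : ℝ | ∃ α : Params w L,
        t = ‖(show EuclideanSpace ℝ (Fin n) from WithLp.toLp 2 (fun k => netFun σ w L α (x k))) - yT‖ ^ 2}} < 1 := by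
  refine sSup_sInf_norm_sub_sq_lt_one _ (fun α r => ⟨(α.1, (r • α.2.1, r * α.2.2)), ?_⟩)
    fun y hy => ?_
  · ext k
    simp [netFun_smul]
  · by_contra! h
    refine hy (WithLp.ofLp_injective 2 (eq_zero_of_forall_sum_mul_netFun_eq_zero hL hw hσ hσnp hx
      fun α => ?_))
    simpa [PiLp.inner_apply, mul_comm] using h α

/-- **Improved expressiveness (Remark 4.3).** For a finite training set
`K = {x_1, …, x_n}` of distinct points and a feedforward network with continuous
nonpolynomial activations, identifying `C(K) ≅ ℝ^n` via `v ↦ (v(x_1), …, v(x_n))`,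
the supremum over unit vectors `y_T ∈ ℝ^n` of the infimum over `y ∈ Ψ(D)` of
`|y - y_T|²` is strictly less than one. -/
theorem improved_expressiveness_on_finite_sets
    (w : ℕ → ℕ) (L : ℕ) (hL : 0 < L) (hw0 : 0 < w 0) (hw : ∀ i, 1 ≤ i → i ≤ L → 0 < w i)
    (σ : ℕ → ℝ → ℝ)
    (hσ : ∀ i, 1 ≤ i → i ≤ L → Continuous (σ i))
    (hσnp : ∀ i, 1 ≤ i → i ≤ L → IsNonpolynomial (σ i))
    (n : ℕ) (hn : 0 < n)
    (x : Fin n → (Fin (w 0) → ℝ)) (hx : Function.Injective x) :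
    sSup {s : ℝ | ∃ yT : EuclideanSpace ℝ (Fin n), ‖yT‖ = 1 ∧
      s = sInf {t : ℝ | ∃ α : Params w L,
        t = ‖(show EuclideanSpace ℝ (Fin n) from WithLp.toLp 2 (fun k => netFun σ w L α (x k))) - yT‖ ^ 2}} < 1 :=
  improved_expressiveness_on_finite_sets_general w L hL hw σ hσ hσnp n x hx
end

section
/- Let K ⊂ ℝ^d be a nonempty compact set and let ψ be a feedforward neural network with depth L ∈ ℕ, widths w_i ∈ ℕ, and continuous activation functions σ_i such that each σ_i, i = 1,…,L, is affine and nonconstant on some nonempty open interval I_i ⊂ ℝ. Then for every ā ∈ ℝ^d and c̄ ∈ ℝ there exist a parameter ᾱ ∈ D and a radius r > 0 such that ψ(ᾱ, x) = āᵀx + c̄ for all x ∈ K and such that for every α in the open ball of radius r around ᾱ in D the function Ψ(α) is affine on K, i.e., there exist a ∈ ℝ^d, c ∈ ℝ with ψ(α, x) = aᵀx + c for all x ∈ K. -/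
open scoped BigOperators ENNReal NNReal

/-!
On the open set of parameters for which, for every `x ∈ K`, every pre-activation of hidden
layer `k + 1` lies in an interval on which `σ (k + 1)` is affine, the network is a composition
of affine maps on `K`, hence affine there. This set is open because `K` is compact and the
pre-activations depend continuously on parameters and input. It contains a parameter realizing
`x ↦ āᵀx + c̄`: the first layer sends `ε₀ (āᵀx) + μ₀` to every neuron, with `ε₀` small enough that
these values stay in the interval; every later layer reads the common affine output of its
predecessor and rescales it in the same way, and the output layer undoes the last rescaling.
-/

open Set

theorem IsCompact.isOpen_setOf_forall_mem {X Y Z : Type*} [TopologicalSpace X]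
    [TopologicalSpace Y] [TopologicalSpace Z] {K : Set Y} (hK : IsCompact K) {f : X → Y → Z}
    (hf : Continuous (Function.uncurry f)) {U : Set Z} (hU : IsOpen U) :
    IsOpen {x | ∀ y ∈ K, f x y ∈ U} :=
  isOpen_iff_eventually.2 fun _ hx => hK.eventually_forall_of_forall_eventually fun y hy =>
    hf.continuousAt.eventually_mem (hU.mem_nhds (hx y hy))

theorem exists_pos_forall_mul_add_mem {B U : Set ℝ} (hB : Bornology.IsBounded B)
    (hU : IsOpen U) (hUne : U.Nonempty) : ∃ ε > 0, ∃ μ, ∀ y ∈ B, ε * y + μ ∈ U := by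
  obtain ⟨μ, hμ⟩ := hUne
  obtain ⟨δ, hδ, hball⟩ := Metric.isOpen_iff.1 hU μ hμ
  obtain ⟨R, hR⟩ := (Metric.isBounded_iff_subset_closedBall 0).1 hB
  have hR1 : 0 < |R| + 1 := by positivity
  refine ⟨δ / (|R| + 1), by positivity, μ, fun y hy => hball ?_⟩
  have hy : |y| ≤ |R| := (mem_closedBall_zero_iff.1 (hR hy)).trans (le_abs_self R)
  rw [Metric.mem_ball, Real.dist_eq, add_sub_cancel_right, abs_mul, abs_of_pos (by positivity),
    div_mul_eq_mul_div, div_lt_iff₀ hR1]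
  nlinarith

def IsAffineOn {n : ℕ} (K : Set (Fin n → ℝ)) (f : (Fin n → ℝ) → ℝ) : Prop :=
  ∃ (a : Fin n → ℝ) (c : ℝ), ∀ x ∈ K, f x = (∑ j, a j * x j) + c

namespace IsAffineOn

variable {n : ℕ} {K : Set (Fin n → ℝ)}

theorem apply (j : Fin n) : IsAffineOn K fun x => x j :=
  ⟨Pi.single j 1, 0, fun _ _ => by simp [Pi.single_apply]⟩

theorem sum_mul_add {m : ℕ} {g : Fin m → (Fin n → ℝ) → ℝ} (hg : ∀ i, IsAffineOn K (g i))
    (A : Fin m → ℝ) (b : ℝ) : IsAffineOn K fun x => (∑ i, A i * g i x) + b := by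
  choose a c hac using hg
  refine ⟨fun j => ∑ i, A i * a i j, (∑ i, A i * c i) + b, fun x hx => ?_⟩
  simp only [hac _ x hx, mul_add, Finset.sum_add_distrib, Finset.mul_sum, Finset.sum_mul]
  rw [Finset.sum_comm]
  simp only [mul_assoc, add_assoc]

theorem comp_of_mapsTo {f : (Fin n → ℝ) → ℝ} (hf : IsAffineOn K f) {g : ℝ → ℝ} {J : Set ℝ}
    {β γ : ℝ} (hg : EqOn g (fun y => β * y + γ) J) (hfJ : MapsTo f K J) :
    IsAffineOn K (g ∘ f) := by
  obtain ⟨a, c, hac⟩ := hf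
  refine ⟨fun j => β * a j, β * c + γ, fun x hx => ?_⟩
  rw [Function.comp_apply, hg (hfJ hx), hac x hx]
  simp only [mul_add, Finset.mul_sum, mul_assoc, add_assoc]

end IsAffineOn

abbrev HiddenParams (w : ℕ → ℕ) (L : ℕ) : Type :=
  ∀ i : Fin L, ((Fin (w (i + 1)) → Fin (w i) → ℝ) × (Fin (w (i + 1)) → ℝ))

noncomputable def preAct (σ : ℕ → ℝ → ℝ) (w : ℕ → ℕ) (L : ℕ) (θ : HiddenParams w L)
    (k : Fin L) (x : Fin (w 0) → ℝ) (i : Fin (w (k + 1))) : ℝ :=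
  (∑ j, (θ k).1 i j * hiddenOut σ w L θ k k.2.le x j) + (θ k).2 i

def PreActMapsTo (σ : ℕ → ℝ → ℝ) (w : ℕ → ℕ) (L : ℕ) (K : Set (Fin (w 0) → ℝ))
    (J : ℕ → Set ℝ) (θ : HiddenParams w L) : Prop :=
  ∀ (k : Fin L) (i : Fin (w (k + 1))), MapsTo (fun x => preAct σ w L θ k x i) K (J k)

section Network

variable {σ : ℕ → ℝ → ℝ} {w : ℕ → ℕ} {L : ℕ}

theorem hiddenOut_succ (θ : HiddenParams w L) {k : ℕ} (hk : k + 1 ≤ L) (x : Fin (w 0) → ℝ)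
    (i : Fin (w (k + 1))) :
    hiddenOut σ w L θ (k + 1) hk x i = σ (k + 1) (preAct σ w L θ ⟨k, hk⟩ x i) :=
  rfl

theorem isAffineOn_hiddenOut {K : Set (Fin (w 0) → ℝ)} {J : ℕ → Set ℝ} {β γ : ℕ → ℝ}
    (hσ : ∀ k < L, EqOn (σ (k + 1)) (fun y => β k * y + γ k) (J k)) {θ : HiddenParams w L}
    (hθ : PreActMapsTo σ w L K J θ) :
    ∀ k (hk : k ≤ L) (j : Fin (w k)), IsAffineOn K fun x => hiddenOut σ w L θ k hk x j
  | 0, _, j => IsAffineOn.apply j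
  | k + 1, hk, i =>
    ((IsAffineOn.sum_mul_add (isAffineOn_hiddenOut hσ hθ k (Nat.le_of_succ_le hk)) _ _
      ).comp_of_mapsTo (hσ k hk) (hθ ⟨k, hk⟩ i) :)

theorem isAffineOn_netFun {K : Set (Fin (w 0) → ℝ)} {J : ℕ → Set ℝ} {β γ : ℕ → ℝ}
    (hσ : ∀ k < L, EqOn (σ (k + 1)) (fun y => β k * y + γ k) (J k)) {α : Params w L}
    (hα : PreActMapsTo σ w L K J α.1) : IsAffineOn K (netFun σ w L α) :=
  IsAffineOn.sum_mul_add (isAffineOn_hiddenOut hσ hα L le_rfl) α.2.1 α.2.2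

theorem continuous_hiddenOut_uncurry (hσ : ∀ i, 1 ≤ i → i ≤ L → Continuous (σ i)) :
    ∀ k (hk : k ≤ L),
      Continuous fun p : HiddenParams w L × (Fin (w 0) → ℝ) => hiddenOut σ w L p.1 k hk p.2
  | 0, _ => continuous_snd
  | k + 1, hk => by
    have := continuous_hiddenOut_uncurry hσ k (Nat.le_of_succ_le hk)
    exact continuous_pi fun i => (hσ (k + 1) le_add_self hk).comp (by fun_prop)

theorem continuous_preAct_uncurry (hσ : ∀ i, 1 ≤ i → i ≤ L → Continuous (σ i)) (k : Fin L)
    (i : Fin (w (k + 1))) :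
    Continuous fun p : HiddenParams w L × (Fin (w 0) → ℝ) => preAct σ w L p.1 k p.2 i := by
  have := continuous_hiddenOut_uncurry (w := w) hσ k k.2.le
  unfold preAct
  fun_prop

theorem isOpen_setOf_preActMapsTo (hσ : ∀ i, 1 ≤ i → i ≤ L → Continuous (σ i))
    {K : Set (Fin (w 0) → ℝ)} (hK : IsCompact K) {J : ℕ → Set ℝ} (hJ : ∀ k < L, IsOpen (J k)) :
    IsOpen {θ : HiddenParams w L | PreActMapsTo σ w L K J θ} := by
  simp only [PreActMapsTo, setOf_forall]
  exact isOpen_iInter_of_finite fun k => isOpen_iInter_of_finite fun i =>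
    hK.isOpen_setOf_forall_mem (continuous_preAct_uncurry hσ k i) (hJ k k.2)

end Network

theorem sum_div_mul_mul_add_sub {n : ℕ} (hn : n ≠ 0) {p : ℝ} (hp : p ≠ 0) (q y ε μ : ℝ) :
    (∑ _j : Fin n, ε / (n * p) * (p * y + q)) + (μ - ε / (n * p) * n * q) = ε * y + μ := by
  simp only [Finset.sum_const, Finset.card_univ, Fintype.card_fin, nsmul_eq_mul]
  field_simp
  ring

/-- With `u x = ∑ j, a j * x j`: layer `1` has pre-activations `ε 0 * u x + μ 0`, and layer
`k + 2` sums the `w (k + 1)` equal outputs `p k * u x + q k` of layer `k + 1` with weights chosen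
to give pre-activations `ε (k + 1) * u x + μ (k + 1)`. -/
noncomputable def relayParams (w : ℕ → ℕ) (L : ℕ) (a : Fin (w 0) → ℝ) (ε μ p q : ℕ → ℝ) :
    HiddenParams w L
  | ⟨0, _⟩ => (fun _ j => ε 0 * a j, fun _ => μ 0)
  | ⟨k + 1, _⟩ => (fun _ _ => ε (k + 1) / (w (k + 1) * p k),
      fun _ => μ (k + 1) - ε (k + 1) / (w (k + 1) * p k) * w (k + 1) * q k)

section Relay

variable {σ : ℕ → ℝ → ℝ} {w : ℕ → ℕ} {L : ℕ} {K : Set (Fin (w 0) → ℝ)} {J : ℕ → Set ℝ}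
  {β γ ε μ : ℕ → ℝ} {a : Fin (w 0) → ℝ}

theorem hiddenOut_succ_eq_of_preAct_eq {θ : HiddenParams w L} {k : ℕ} (hk : k + 1 ≤ L)
    {x : Fin (w 0) → ℝ} {i : Fin (w (k + 1))} {b c e m : ℝ} {S : Set ℝ}
    (hσ : EqOn (σ (k + 1)) (fun y => b * y + c) S) {y : ℝ}
    (hpre : preAct σ w L θ ⟨k, hk⟩ x i = e * y + m) (hS : e * y + m ∈ S) :
    hiddenOut σ w L θ (k + 1) hk x i = b * e * y + (b * m + c) := by
  rw [hiddenOut_succ, hpre, hσ hS]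
  ring

theorem preAct_relayParams (hw : ∀ i, 1 ≤ i → i ≤ L → 0 < w i)
    (hσ : ∀ k < L, EqOn (σ (k + 1)) (fun y => β k * y + γ k) (J k))
    (hβε : ∀ k < L, β k * ε k ≠ 0)
    (hmem : ∀ k < L, ∀ x ∈ K, ε k * (∑ j, a j * x j) + μ k ∈ J k) :
    ∀ (k : ℕ) (hk : k < L) (i : Fin (w (k + 1))), ∀ x ∈ K,
      preAct σ w L (relayParams w L a ε μ (β * ε) (β * μ + γ)) ⟨k, hk⟩ x i =
        ε k * (∑ j, a j * x j) + μ k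
  | 0, _, _, x, _ => by
    change (∑ j, ε 0 * a j * x j) + μ 0 = _
    simp only [Finset.mul_sum, mul_assoc]
  | k + 1, hk, _, x, hx => by
    have hkL : k < L := Nat.lt_of_succ_lt hk
    have hout (j : Fin (w (k + 1))) := hiddenOut_succ_eq_of_preAct_eq hkL (hσ k hkL)
      (preAct_relayParams hw hσ hβε hmem k hkL j x hx) (hmem k hkL x hx)
    change (∑ j, _ * hiddenOut _ _ _ _ (k + 1) _ x j) + _ = _
    simp only [hout]
    exact sum_div_mul_mul_add_sub (hw (k + 1) le_add_self hk.le).ne' (hβε k hkL) _ _ _ _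

theorem exists_params_netFun_eq (hw : ∀ i, 1 ≤ i → i ≤ L → 0 < w i)
    (hσ : ∀ k < L, EqOn (σ (k + 1)) (fun y => β k * y + γ k) (J k))
    (hβε : ∀ k < L, β k * ε k ≠ 0)
    (hmem : ∀ k < L, ∀ x ∈ K, ε k * (∑ j, a j * x j) + μ k ∈ J k) (c : ℝ) :
    ∃ α : Params w L, (∀ x ∈ K, netFun σ w L α x = (∑ j, a j * x j) + c) ∧
      PreActMapsTo σ w L K J α.1 := by
  cases L with
  | zero => exact ⟨(finZeroElim, (a, c)), fun _ _ => rfl, fun k => k.elim0⟩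
  | succ l =>
    have hpre := preAct_relayParams hw hσ hβε hmem
    have hout (x) (hx : x ∈ K) (j : Fin (w (l + 1))) :=
      hiddenOut_succ_eq_of_preAct_eq le_rfl (hσ l l.lt_add_one) (hpre l l.lt_add_one j x hx)
        (hmem l l.lt_add_one x hx)
    refine ⟨(relayParams w (l + 1) a ε μ (β * ε) (β * μ + γ),
      fun _ => 1 / (w (l + 1) * (β l * ε l)), c - 1 / (w (l + 1) * (β l * ε l)) * w (l + 1) *
        (β l * μ l + γ l)), fun x hx => ?_, fun ⟨k, hk⟩ i x hx => ?_⟩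
    · simp only [netFun, hout x hx]
      rw [sum_div_mul_mul_add_sub (hw (l + 1) le_add_self le_rfl).ne' (hβε l l.lt_add_one), one_mul]
    · show preAct _ _ _ _ _ x i ∈ _
      rw [hpre k hk i x hx]
      exact hmem k hk x hx

end Relay

theorem affine_realization_locally_affine_general
    (w : ℕ → ℕ) (L : ℕ) (hw : ∀ i, 1 ≤ i → i ≤ L → 0 < w i)
    (σ : ℕ → ℝ → ℝ)
    (hσ : ∀ i, 1 ≤ i → i ≤ L → Continuous (σ i))
    (haff : ∀ i, 1 ≤ i → i ≤ L → ∃ s t β γ : ℝ, s < t ∧ β ≠ 0 ∧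
      ∀ x ∈ Set.Ioo s t, σ i x = β * x + γ)
    (K : Set (Fin (w 0) → ℝ)) (hKc : IsCompact K)
    (abar : Fin (w 0) → ℝ) (cbar : ℝ) :
    ∃ (ᾱ : Params w L) (r : ℝ), 0 < r ∧
      (∀ x ∈ K, netFun σ w L ᾱ x = (∑ j, abar j * x j) + cbar) ∧
      ∀ α ∈ Metric.ball ᾱ r, ∃ (a : Fin (w 0) → ℝ) (c : ℝ),
        ∀ x ∈ K, netFun σ w L α x = (∑ j, a j * x j) + c := by
  have hB : Bornology.IsBounded ((fun x => ∑ j, abar j * x j) '' K) :=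
    (hKc.image (by fun_prop)).isBounded
  have hlayer (k : ℕ) : ∃ (J : Set ℝ) (β γ ε μ : ℝ), k < L → IsOpen J ∧ β * ε ≠ 0 ∧
      EqOn (σ (k + 1)) (fun y => β * y + γ) J ∧ ∀ x ∈ K, ε * (∑ j, abar j * x j) + μ ∈ J := by
    by_cases hk : k < L
    · obtain ⟨s, t, β, γ, hst, hβ, hσst⟩ := haff (k + 1) le_add_self hk
      obtain ⟨ε, hε, μ, hμ⟩ := exists_pos_forall_mul_add_mem hB isOpen_Ioo (nonempty_Ioo.2 hst)
      exact ⟨_, β, γ, ε, μ, fun _ => ⟨isOpen_Ioo, mul_ne_zero hβ hε.ne', hσst,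
        fun x hx => hμ _ (mem_image_of_mem _ hx)⟩⟩
    · exact ⟨∅, 0, 0, 0, 0, fun h => absurd h hk⟩
  choose J β γ ε μ hJ using hlayer
  obtain ⟨ᾱ, hᾱ, hᾱJ⟩ := exists_params_netFun_eq hw (fun k hk => (hJ k hk).2.2.1)
    (fun k hk => (hJ k hk).2.1) (fun k hk => (hJ k hk).2.2.2) cbar
  have hG : IsOpen {α : Params w L | PreActMapsTo σ w L K J α.1} :=
    (isOpen_setOf_preActMapsTo hσ hKc fun k hk => (hJ k hk).1).preimage continuous_fst
  obtain ⟨r, hr, hball⟩ := Metric.isOpen_iff.1 hG ᾱ hᾱJ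
  exact ⟨ᾱ, r, hr, hᾱ, fun α hα => isAffineOn_netFun (fun k hk => (hJ k hk).2.2.1) (hball hα)⟩

/-- **Construction in Lemma 4.4.** If every activation function is continuous and
affine and nonconstant on some nonempty open interval, then every affine function
`x ↦ āᵀx + c̄` is realized on `K` by a parameter `ᾱ ∈ D` such that all parameters in
some open ball around `ᾱ` also realize affine functions on `K`. -/
theorem affine_realization_locally_affine
    (w : ℕ → ℕ) (L : ℕ) (hL : 0 < L) (hw0 : 0 < w 0) (hw : ∀ i, 1 ≤ i → i ≤ L → 0 < w i)
    (σ : ℕ → ℝ → ℝ)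
    (hσ : ∀ i, 1 ≤ i → i ≤ L → Continuous (σ i))
    (haff : ∀ i, 1 ≤ i → i ≤ L → ∃ s t β γ : ℝ, s < t ∧ β ≠ 0 ∧
      ∀ x ∈ Set.Ioo s t, σ i x = β * x + γ)
    (K : Set (Fin (w 0) → ℝ)) (hKne : K.Nonempty) (hKc : IsCompact K)
    (abar : Fin (w 0) → ℝ) (cbar : ℝ) :
    ∃ (ᾱ : Params w L) (r : ℝ), 0 < r ∧
      (∀ x ∈ K, netFun σ w L ᾱ x = (∑ j, abar j * x j) + cbar) ∧
      ∀ α ∈ Metric.ball ᾱ r, ∃ (a : Fin (w 0) → ℝ) (c : ℝ),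
        ∀ x ∈ K, netFun σ w L α x = (∑ j, a j * x j) + c :=
  affine_realization_locally_affine_general w L hw σ hσ haff K hKc abar cbar
end
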